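/- Let V_y(x) = (1/2)(−1/(2y) + 1/|x̃_y| + 1/|x − 2y e₁| − 1/|x̃_y − x|) with x̃_y = (2y − x₁, x₂, x₃) and 2y e₁ = (2y,0,0), and set V_y^<(x) = V_y(x) + 1/(2|x̃_y − x|). Then there exists C > 0 such that |V_y^<(x)| ≤ C/y for all x in the half-space ℝ³_y = {x₁ < y} and all y > 0. -/
import Mathlib


open Real MeasureTheory

/-- The mirror image `x̃_y = (2y - x₁, x₂, x₃)` of `x` across the wall `{x₁ = y}`. -/
noncomputable def mirror (y : ℝ) (x : EuclideanSpace ℝ (Fin 3)) : EuclideanSpace ℝ (Fin 3) :=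
  (EuclideanSpace.equiv (Fin 3) ℝ).symm ![2 * y - x 0, x 1, x 2]

/-- The image-charge potential of a hydrogen atom facing a conductor wall at `{x₁ = y}`. -/
noncomputable def Vwall (y : ℝ) (x : EuclideanSpace ℝ (Fin 3)) : ℝ :=
  (1 / 2) * (-(1 / (2 * y)) + 1 / ‖mirror y x‖
    + 1 / ‖x - (EuclideanSpace.equiv (Fin 3) ℝ).symm ![2 * y, 0, 0]‖
    - 1 / ‖mirror y x - x‖)

/-- `V_y^< = V_y + 1/(2|x̃_y - x|)`, the regular part of the potential. -/
noncomputable def Vlt (y : ℝ) (x : EuclideanSpace ℝ (Fin 3)) : ℝ :=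
  Vwall y x + 1 / (2 * ‖mirror y x - x‖)

lemma abs_coord_le_norm (v : EuclideanSpace ℝ (Fin 3)) (i : Fin 3) : |v i| ≤ ‖v‖ := by
  rw [EuclideanSpace.norm_eq]
  have h1 : |v i| = Real.sqrt (‖v i‖ ^ 2) := by
    rw [Real.sqrt_sq (norm_nonneg _)]; rfl
  rw [h1]
  apply Real.sqrt_le_sqrt
  exact Finset.single_le_sum (fun j _ => sq_nonneg ‖v j‖) (Finset.mem_univ i)

/-- `|V_y^<(x)| ≤ C/y` uniformly on the half-space `{x₁ < y}` and in `y > 0`. -/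
theorem Vlt_bound :
    ∃ C > (0 : ℝ), ∀ y : ℝ, 0 < y → ∀ x : EuclideanSpace ℝ (Fin 3), x 0 < y →
      |Vlt y x| ≤ C / y := by
  refine ⟨1, one_pos, fun y hy x hx => ?_⟩
  set a := ‖mirror y x‖ with ha
  set b := ‖x - (EuclideanSpace.equiv (Fin 3) ℝ).symm ![2 * y, 0, 0]‖ with hb
  set t := ‖mirror y x - x‖ with ht
  have hm0 : (mirror y x) 0 = 2 * y - x 0 := by simp [mirror]
  have hya : y ≤ a := by
    have := abs_coord_le_norm (mirror y x) 0
    rw [hm0] at this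
    calc y ≤ |2 * y - x 0| := by rw [abs_of_pos (by linarith)]; linarith
    _ ≤ a := this
  have hyb : y ≤ b := by
    have := abs_coord_le_norm (x - (EuclideanSpace.equiv (Fin 3) ℝ).symm ![2 * y, 0, 0]) 0
    have h0 : (x - (EuclideanSpace.equiv (Fin 3) ℝ).symm ![2 * y, 0, 0]) 0 = x 0 - 2 * y := by
      simp
    rw [h0] at this
    calc y ≤ |x 0 - 2 * y| := by rw [abs_of_neg (by linarith)]; linarith
    _ ≤ b := this
  have htpos : 0 < t := by
    have := abs_coord_le_norm (mirror y x - x) 0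
    have h0 : (mirror y x - x) 0 = 2 * y - x 0 - x 0 := by simp [mirror]
    rw [h0] at this
    have : 0 < |2 * y - x 0 - x 0| := abs_pos.mpr (by linarith)
    linarith [abs_coord_le_norm (mirror y x - x) 0, h0 ▸ this]
  have hapos : 0 < a := lt_of_lt_of_le hy hya
  have hbpos : 0 < b := lt_of_lt_of_le hy hyb
  have hV : Vlt y x = 1 / 2 * (-(1 / (2 * y)) + 1 / a + 1 / b) := by
    rw [Vlt, Vwall, ← ha, ← hb, ← ht]
    field_simp
    ring
  have h1a : 1 / a ≤ 1 / y := one_div_le_one_div_of_le hy hya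
  have h1b : 1 / b ≤ 1 / y := one_div_le_one_div_of_le hy hyb
  have h2y : 1 / (2 * y) ≤ 1 / y := by
    apply one_div_le_one_div_of_le hy; linarith
  have hapos' : 0 < 1 / a := by positivity
  have hbpos' : 0 < 1 / b := by positivity
  have h2ypos : 0 < 1 / (2 * y) := by positivity
  rw [hV, abs_le]
  constructor <;> · simp only [one_div] at *; nlinarith
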